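/- Over the ranked alphabet {g : 1, g′ : 1, h : 1, x : 0}, call a context B any finite composition of the unary symbols g and g′ (possibly the identity), and let L := { B(h(Bⁿ(x))) : B a context over {g, g′}, n ≥ 0 }, where Bⁿ denotes the n-fold composition of B. Then L is not a regular tree language: no deterministic bottom-up tree automaton accepts exactly L. -/

import Mathlib

/-!
A deterministic automaton with `Q` states assigns to each of the `2 ^ (|Q| + 1)` words `B` of
length `|Q| + 1` one of the `|Q| + 1` values of `run (B(x))`, so two distinct words `B ≠ C` of
that length share it. Runs are compositional, so `B(h(C(x)))` is accepted together with
`B(h(B(x))) ∈ L`. But `B(h(C(x))) ∈ L` forces `C = Bⁿ` as words, and comparing lengths gives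
`n = 1`, i.e. `C = B`.
-/

namespace SyGuS

/-- Terms over a ranked alphabet: symbols `F`, each of arity `ar f`. -/
inductive Tm (F : Type) (ar : F → ℕ) : Type
  | app (f : F) (args : Fin (ar f) → Tm F ar) : Tm F ar

/-- Arity function on `F ⊕ Fin k`: the `k` extra symbols are constants
(the variables `x₁,…,x_k`, treated as constants). -/
abbrev varAr {F : Type} (ar : F → ℕ) (k : ℕ) : F ⊕ Fin k → ℕ := Sum.elim ar fun _ => 0

/-- Arity function on `F ⊕ Unit`: the extra symbol is the function symbol `f` of arity `k`. -/
abbrev fAr {F : Type} (ar : F → ℕ) (k : ℕ) : F ⊕ Unit → ℕ := Sum.elim ar fun _ => k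

/-- A (nonempty) first-order structure for the ranked alphabet `(F, ar)`. -/
structure Str (F : Type) (ar : F → ℕ) : Type 1 where
  D : Type
  [nonemptyD : Nonempty D]
  interp : (f : F) → (Fin (ar f) → D) → D

attribute [instance] Str.nonemptyD

/-- Evaluation of a ground term in a structure. -/
def Tm.eval {F : Type} {ar : F → ℕ} (M : Str F ar) : Tm F ar → M.D
  | .app f args => M.interp f fun i => (args i).eval M

/-- First-order substitution: replace the variables `x₁,…,x_k` by terms. -/
def Tm.instVars {F : Type} {ar : F → ℕ} {k : ℕ} (σ : Fin k → Tm F ar) :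
    Tm (F ⊕ Fin k) (varAr ar k) → Tm F ar
  | .app (Sum.inl g) args => .app g fun i => Tm.instVars σ (args i)
  | .app (Sum.inr i) _ => σ i

/-- Second-order substitution `·{w/f}`: replace every application `f(s₁,…,s_k)` of the
distinguished symbol `f` by `w{s₁/x₁,…,s_k/x_k}`. -/
def Tm.soSubst {F : Type} {ar : F → ℕ} {k : ℕ} (w : Tm (F ⊕ Fin k) (varAr ar k)) :
    Tm (F ⊕ Unit) (fAr ar k) → Tm F ar
  | .app (Sum.inl g) args => .app g fun i => Tm.soSubst w (args i)
  | .app (Sum.inr _) args => Tm.instVars (fun i => Tm.soSubst w (args i)) w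

/-- Renaming of symbols along an arity-preserving map. -/
def Tm.rename {F G : Type} {arF : F → ℕ} {arG : G → ℕ} (h : F → G)
    (hh : ∀ f, arG (h f) = arF f) : Tm F arF → Tm G arG
  | .app f args => .app (h f) fun i => (args (Fin.cast (hh f) i)).rename h hh

/-- Equational consequence: `E ⊢ s = t` iff every structure satisfying all
equations of `E` also satisfies `s = t`. -/
def EqCons {F : Type} {ar : F → ℕ} (E : Set (Tm F ar × Tm F ar)) (s t : Tm F ar) : Prop :=
  ∀ M : Str F ar, (∀ e ∈ E, Tm.eval M e.1 = Tm.eval M e.2) → s.eval M = t.eval M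

/-- Deterministic bottom-up tree automaton with a partial transition function. -/
structure DTA (F : Type) (ar : F → ℕ) : Type 1 where
  Q : Type
  [fintypeQ : Fintype Q]
  δ : (f : F) → (Fin (ar f) → Q) → Option Q
  final : Set Q

attribute [instance] DTA.fintypeQ

/-- Sequence a finite tuple of options. -/
def finSeq {Q : Type} : {n : ℕ} → (Fin n → Option Q) → Option (Fin n → Q)
  | 0, _ => some (fun i => i.elim0)
  | _ + 1, f => (f 0).bind fun q => (finSeq fun i => f i.succ).map (Fin.cons q)

/-- The (partial) run of the automaton on a term: `δ` extended to terms. -/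
def DTA.run {F : Type} {ar : F → ℕ} (A : DTA F ar) : Tm F ar → Option A.Q
  | .app f args => (finSeq fun i => A.run (args i)).bind fun qs => A.δ f qs

/-- The language accepted by the automaton. -/
def DTA.lang {F : Type} {ar : F → ℕ} (A : DTA F ar) : Set (Tm F ar) :=
  { t | ∃ q ∈ A.final, A.run t = some q }

/-- A tree language is regular if it is the language of some deterministic
bottom-up tree automaton. -/
def IsRegularTreeLang {F : Type} {ar : F → ℕ} (L : Set (Tm F ar)) : Prop :=
  ∃ A : DTA F ar, L = A.lang

/-- The ranked alphabet `{g : 1, g' : 1, h : 1, x : 0}`. -/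
inductive Sym14 : Type
  | g | g' | h | x
  deriving DecidableEq

instance : Fintype Sym14 :=
  ⟨{Sym14.g, Sym14.g', Sym14.h, Sym14.x}, by intro s; cases s <;> simp⟩

def ar14 : Sym14 → ℕ
  | .g => 1
  | .g' => 1
  | .h => 1
  | .x => 0

/-- Application of a unary symbol. -/
def ap1 (s : Sym14) (h : ar14 s = 1) (t : Tm Sym14 ar14) : Tm Sym14 ar14 :=
  .app s (fun _ => t)

/-- The constant `x`. -/
def xTm : Tm Sym14 ar14 := .app .x (fun i => i.elim0)

/-- A context `B` over `{g, g'}` (a finite, possibly empty, composition of the unary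
symbols `g` and `g'`, `true` standing for `g` and `false` for `g'`), applied to `t`. -/
def applyCtx (B : List Bool) (t : Tm Sym14 ar14) : Tm Sym14 ar14 :=
  B.foldr (fun b acc => ap1 (if b then .g else .g') (by cases b <;> rfl) acc) t

/-- The language `L = { B(h(Bⁿ(x))) : B a context over {g, g'}, n ≥ 0 }`. -/
def L14 : Set (Tm Sym14 ar14) :=
  { t | ∃ (B : List Bool) (n : ℕ), t = applyCtx B (ap1 .h rfl ((applyCtx B)^[n] xTm)) }

section Automata

variable {F : Type} {ar : F → ℕ} (A : DTA F ar)

theorem DTA.run_app_congr (f : F) {args args' : Fin (ar f) → Tm F ar}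
    (h : ∀ i, A.run (args i) = A.run (args' i)) :
    A.run (.app f args) = A.run (.app f args') := by
  simp only [DTA.run, h]

theorem DTA.mem_lang_of_run_eq {t t' : Tm F ar} (h : A.run t = A.run t') (ht : t ∈ A.lang) :
    t' ∈ A.lang := by
  obtain ⟨q, hq, hrun⟩ := ht
  exact ⟨q, hq, h ▸ hrun⟩

end Automata

def Tm.head {F : Type} {ar : F → ℕ} : Tm F ar → F
  | .app f _ => f

theorem applyCtx_cons (b : Bool) (B : List Bool) (t : Tm Sym14 ar14) :
    applyCtx (b :: B) t = .app (if b then .g else .g') fun _ => applyCtx B t :=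
  rfl

theorem applyCtx_append (B C : List Bool) (t : Tm Sym14 ar14) :
    applyCtx (B ++ C) t = applyCtx B (applyCtx C t) := by
  simp only [applyCtx, List.foldr_append]

theorem applyCtx_iterate (B : List Bool) (n : ℕ) (t : Tm Sym14 ar14) :
    (applyCtx B)^[n] t = applyCtx (List.replicate n B).flatten t := by
  induction n with
  | zero => rfl
  | succ n ih =>
    rw [Function.iterate_succ_apply', ih, List.replicate_succ, List.flatten_cons,
      applyCtx_append]

theorem DTA.run_applyCtx_congr (A : DTA Sym14 ar14) (B : List Bool) {t t' : Tm Sym14 ar14}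
    (h : A.run t = A.run t') : A.run (applyCtx B t) = A.run (applyCtx B t') := by
  induction B with
  | nil => exact h
  | cons b B ih => exact A.run_app_congr _ fun _ => ih

theorem applyCtx_inj {B B' : List Bool} {s s' : Tm Sym14 ar14}
    (hs : s.head = .h ∨ s.head = .x) (hs' : s'.head = .h ∨ s'.head = .x)
    (h : applyCtx B s = applyCtx B' s') : B = B' ∧ s = s' := by
  induction B generalizing B' with
  | nil =>
    cases B' with
    | nil => exact ⟨rfl, h⟩
    | cons b' B' =>
      subst h
      cases b' <;> simp [applyCtx_cons, Tm.head] at hs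
  | cons b B ih =>
    cases B' with
    | nil =>
      subst h
      cases b <;> simp [applyCtx_cons, Tm.head] at hs'
    | cons b' B' =>
      rw [applyCtx_cons, applyCtx_cons] at h
      injection h with hsym hargs
      obtain rfl : b = b' := by cases b <;> cases b' <;> simp_all
      have hpos : 0 < ar14 (if b then .g else .g') := by cases b <;> exact Nat.one_pos
      obtain ⟨rfl, hst⟩ := ih (congrFun (eq_of_heq hargs) ⟨0, hpos⟩)
      exact ⟨rfl, hst⟩

theorem exists_eq_flatten_replicate_of_mem_L14 {B C : List Bool}
    (h : applyCtx B (ap1 .h rfl (applyCtx C xTm)) ∈ L14) :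
    ∃ n, C = (List.replicate n B).flatten := by
  obtain ⟨B', n, heq⟩ := h
  obtain ⟨rfl, hinner⟩ := applyCtx_inj (.inl rfl) (.inl rfl) heq
  injection hinner with _ hargs
  rw [applyCtx_iterate] at hargs
  exact ⟨n, (applyCtx_inj (.inr rfl) (.inr rfl) (congrFun hargs ⟨0, Nat.one_pos⟩)).1⟩

theorem _root_.List.eq_of_eq_flatten_replicate {α : Type*} {B C : List α} {n : ℕ}
    (hB : B ≠ []) (hlen : C.length = B.length) (hC : C = (List.replicate n B).flatten) : C = B := by
  have hn : n * B.length = 1 * B.length := by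
    simpa [hlen, List.length_flatten, List.sum_replicate] using (congrArg List.length hC).symm
  rw [Nat.eq_of_mul_eq_mul_right (List.length_pos_iff.mpr hB) hn] at hC
  simpa using hC

theorem DTA.exists_ne_run_applyCtx_eq (A : DTA Sym14 ar14) :
    ∃ B C : List Bool, B ≠ C ∧ B ≠ [] ∧ C.length = B.length ∧
      A.run (applyCtx B xTm) = A.run (applyCtx C xTm) := by
  classical
  set m := Fintype.card (Option A.Q)
  have hcard : Fintype.card (Option A.Q) < Fintype.card (Fin m → Bool) := by
    rw [Fintype.card_fun, Fintype.card_fin, Fintype.card_bool]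
    exact Nat.lt_two_pow_self
  obtain ⟨v, w, hvw, hrun⟩ := Fintype.exists_ne_map_eq_of_card_lt
    (fun v : Fin m → Bool => A.run (applyCtx (List.ofFn v) xTm)) hcard
  have hm : 0 < m := Fintype.card_pos
  exact ⟨List.ofFn v, List.ofFn w, fun h => hvw (List.ofFn_inj.mp h),
    by simpa using hm.ne', by simp, hrun⟩

/-- The language `L = { B(h(Bⁿ(x))) }` over the ranked alphabet
`{g : 1, g' : 1, h : 1, x : 0}` is not a regular tree language: no deterministic
bottom-up tree automaton accepts exactly `L`. -/
theorem L14_not_regular : ¬ IsRegularTreeLang L14 := by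
  rintro ⟨A, hL⟩
  obtain ⟨B, C, hne, hB, hlen, hrun⟩ := A.exists_ne_run_applyCtx_eq
  have hBB : applyCtx B (ap1 .h rfl (applyCtx B xTm)) ∈ A.lang := hL ▸ ⟨B, 1, rfl⟩
  have hBC : applyCtx B (ap1 .h rfl (applyCtx C xTm)) ∈ L14 :=
    hL ▸ A.mem_lang_of_run_eq
      (A.run_applyCtx_congr B (A.run_app_congr .h fun _ => hrun)) hBB
  obtain ⟨n, hC⟩ := exists_eq_flatten_replicate_of_mem_L14 hBC
  exact hne (List.eq_of_eq_flatten_replicate hB hlen hC).symm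

end SyGuS
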